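/- The map p ↦ (x^ℝ, s^ℝ, B^ℝ) := (Re(conj(p))/√(|p|²-1), -2 Im(p), 1/√(|p|²-1)) is a bijection from {p ∈ ℂ : |p| > 1} onto the set of triples (x, s, B) of real numbers with B > 0 and x² + (s²/4 - 1)B² = 1. -/

import Mathlib

/-!
On the surface, `x / B` and `-s / 2` are the real and imaginary parts of a point `p` with
`|p|² - 1 = (x² + s²/4 - B²) / B² = 1 / B²`, so `B` recovers `√(|p|² - 1)` and the map
`(x, s, B) ↦ x / B - i s / 2` inverts the parametrization.
-/

noncomputable section

lemma sq_norm_eq_re_sq_add_im_sq (p : ℂ) : ‖p‖ ^ 2 = p.re ^ 2 + p.im ^ 2 := by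
  rw [Complex.sq_norm, Complex.normSq_apply]; ring

lemma sqrt_sq_norm_sub_one_pos {p : ℂ} (hp : 1 < ‖p‖) : 0 < √(‖p‖ ^ 2 - 1) :=
  Real.sqrt_pos.mpr (by nlinarith)

namespace MonodromySurface

def ofP (p : ℂ) : ℝ × ℝ × ℝ :=
  ((starRingEnd ℂ p).re / √(‖p‖ ^ 2 - 1), -2 * p.im, 1 / √(‖p‖ ^ 2 - 1))

def toP (t : ℝ × ℝ × ℝ) : ℂ := ⟨t.1 / t.2.2, -t.2.1 / 2⟩

def posPart : Set (ℝ × ℝ × ℝ) :=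
  {t | 0 < t.2.2 ∧ t.1 ^ 2 + (t.2.1 ^ 2 / 4 - 1) * t.2.2 ^ 2 = 1}

lemma sq_norm_toP_sub_one {t : ℝ × ℝ × ℝ} (ht : t ∈ posPart) :
    ‖toP t‖ ^ 2 - 1 = (1 / t.2.2) ^ 2 := by
  obtain ⟨hB, hsurf⟩ := ht
  rw [sq_norm_eq_re_sq_add_im_sq, toP]
  field_simp
  linear_combination 4 * hsurf

lemma sqrt_sq_norm_toP_sub_one {t : ℝ × ℝ × ℝ} (ht : t ∈ posPart) :
    √(‖toP t‖ ^ 2 - 1) = 1 / t.2.2 := by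
  rw [sq_norm_toP_sub_one ht, Real.sqrt_sq (one_div_pos.mpr ht.1).le]

lemma mapsTo_ofP : Set.MapsTo ofP {p : ℂ | 1 < ‖p‖} posPart := by
  intro p hp
  have hr := sqrt_sq_norm_sub_one_pos hp
  have hr_sq : √(‖p‖ ^ 2 - 1) ^ 2 = ‖p‖ ^ 2 - 1 := Real.sq_sqrt (by nlinarith [hp.out])
  refine ⟨by simp only [ofP]; positivity, ?_⟩
  simp only [ofP, Complex.conj_re]
  field_simp
  linear_combination -4 * hr_sq - 4 * sq_norm_eq_re_sq_add_im_sq p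

lemma mapsTo_toP : Set.MapsTo toP posPart {p : ℂ | 1 < ‖p‖} := by
  intro t ht
  have hB := ht.1
  have h : 0 < ‖toP t‖ ^ 2 - 1 := sq_norm_toP_sub_one ht ▸ by positivity
  exact (one_lt_sq_iff₀ (norm_nonneg _)).mp (by linarith)

lemma leftInvOn_toP_ofP : Set.LeftInvOn toP ofP {p : ℂ | 1 < ‖p‖} := by
  intro p hp
  have hr := (sqrt_sq_norm_sub_one_pos hp).ne'
  apply Complex.ext <;> simp only [toP, ofP, Complex.conj_re] <;> field_simp

lemma rightInvOn_toP_ofP : Set.RightInvOn toP ofP posPart := by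
  intro t ht
  have hB := ht.1.ne'
  rw [ofP, sqrt_sq_norm_toP_sub_one ht]
  ext <;> simp only [toP, Complex.conj_re] <;> field_simp

end MonodromySurface

end

open MonodromySurface in
/-- The map `p ↦ (Re(conj p)/√(|p|²-1), -2 Im p, 1/√(|p|²-1))` is a bijection from
`{p : |p| > 1}` onto the `B > 0` part of the monodromy surface
`{(x,s,B) : x² + (s²/4 - 1)B² = 1}`. -/
theorem p_parametrization_bijection :
    Set.BijOn
      (fun p : ℂ =>
        (((starRingEnd ℂ p).re / Real.sqrt (‖p‖ ^ 2 - 1), -2 * p.im,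
          1 / Real.sqrt (‖p‖ ^ 2 - 1)) : ℝ × ℝ × ℝ))
      {p : ℂ | 1 < ‖p‖}
      {t : ℝ × ℝ × ℝ | 0 < t.2.2 ∧ t.1 ^ 2 + (t.2.1 ^ 2 / 4 - 1) * t.2.2 ^ 2 = 1} :=
  Set.InvOn.bijOn ⟨leftInvOn_toP_ofP, rightInvOn_toP_ofP⟩ mapsTo_ofP mapsTo_toP
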